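/- arXiv:2108.03059 — 2 statements merged into one kernel-verified Lean document; each statement's English description precedes it below -/
import Mathlib

section
/- Let A₁ and A₂ be disjoint sets such that A₁, A₂, and A₁ ∪ A₂ are all HO in G. Then for any pattern p, N(G*)p = 𝟏 if and only if N(G)p = 𝟏 and x_{A₁}·p = 0 and x_{A₂}·p = 0. Moreover, A₁ and A₂ are NO in G*, and ν(G*) = ν(G) − 2. -/
open Matrix
open scoped Classical

/-- The closed neighborhood matrix of a simple graph over `ℤ₂`:
`N(G) u v = 1` iff `u = v` or `u` is adjacent to `v`. -/
noncomputable def nbhdMatrix {V : Type*} [Fintype V] (G : SimpleGraph V) :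
    Matrix V V (ZMod 2) :=
  Matrix.of fun u v => if u = v ∨ G.Adj u v then 1 else 0

/-- The nullity of a matrix over `ℤ₂`: the dimension of its kernel. -/
noncomputable def nullityM {V : Type*} [Fintype V] (M : Matrix V V (ZMod 2)) : ℕ :=
  Module.finrank (ZMod 2) (LinearMap.ker M.mulVecLin)

/-- The nullity `ν(G)` of a graph. -/
noncomputable def graphNullity {V : Type*} [Fintype V] (G : SimpleGraph V) : ℕ :=
  nullityM (nbhdMatrix G)

/-- Characteristic vector of a set of vertices. -/
noncomputable def chi {V : Type*} (A : Set V) : V → ZMod 2 :=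
  fun v => if v ∈ A then 1 else 0

/-- A configuration `c` is solvable (w.r.t. the matrix `M`) if `M p = c` for some pattern `p`. -/
def Solv {V : Type*} [Fintype V] (M : Matrix V V (ZMod 2)) (c : V → ZMod 2) : Prop :=
  ∃ p : V → ZMod 2, M.mulVec p = c

/-- `A` is `c`-always odd activated: `A` is solvable and `x_A · p = 1` for every solving
pattern `p` for `c`. -/
def cAO {V : Type*} [Fintype V] (M : Matrix V V (ZMod 2)) (c : V → ZMod 2)
    (A : Set V) : Prop :=
  Solv M (chi A) ∧ ∀ p : V → ZMod 2, M.mulVec p = c → chi A ⬝ᵥ p = 1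

/-- `A` is `c`-never odd activated: `A` is solvable and `x_A · p = 0` for every solving
pattern `p` for `c`. -/
def cNO {V : Type*} [Fintype V] (M : Matrix V V (ZMod 2)) (c : V → ZMod 2)
    (A : Set V) : Prop :=
  Solv M (chi A) ∧ ∀ p : V → ZMod 2, M.mulVec p = c → chi A ⬝ᵥ p = 0

/-- `A` is always odd activated (AO): `𝟏`-always odd activated. -/
def AO {V : Type*} [Fintype V] (M : Matrix V V (ZMod 2)) (A : Set V) : Prop :=
  cAO M 1 A

/-- `A` is never odd activated (NO): `𝟏`-never odd activated. -/
def NO {V : Type*} [Fintype V] (M : Matrix V V (ZMod 2)) (A : Set V) : Prop :=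
  cNO M 1 A

/-- `A` is half odd activated (HO): `x_A` is not solvable. -/
def HO {V : Type*} [Fintype V] (M : Matrix V V (ZMod 2)) (A : Set V) : Prop :=
  ¬ Solv M (chi A)

/-- The closed neighborhood matrix of the graph `G*` obtained from `G` by toggling every
pair of vertices between the disjoint sets `A₁` and `A₂`:
`N(G*) = N(G) + x_{A₁} x_{A₂}ᵗ + x_{A₂} x_{A₁}ᵗ` over `ℤ₂`. -/
noncomputable def starMatrix {V : Type*} [Fintype V] (G : SimpleGraph V)
    (A₁ A₂ : Set V) : Matrix V V (ZMod 2) :=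
  nbhdMatrix G + Matrix.vecMulVec (chi A₁) (chi A₂) + Matrix.vecMulVec (chi A₂) (chi A₁)


/-!
Write `N = N(G)`, `a = x_{A₁}`, `b = x_{A₂}`, so that `N(G*) p = N p + (b·p) a + (a·p) b`. Over ℤ₂ the
three HO hypotheses say exactly that no nonzero combination `α a + β b` lies in the column space of `N`.
Hence whenever `N(G*) p` lies in that column space (as `𝟏` does by Sutner's theorem, and as `0` does),
both coefficients `b·p` and `a·p` vanish; this describes the odd dominating patterns of `G*` and gives
`ker N(G*) = ker N ∩ a^⊥ ∩ b^⊥`. Since `N` is symmetric, its column space is `(ker N)^⊥`, so the same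
independence makes `z ↦ (a·z, b·z)` map `ker N` onto `ℤ₂²`. A kernel vector with `(a·z, b·z) = (0, 1)`
solves `x_{A₁}` in `G*`, and rank–nullity gives `ν(G*) = ν(G) − 2`.
-/

section CommRing

variable {R V : Type*} [CommRing R] [Fintype V] {M : Matrix V V R} {a b : V → R}

def LinearIndependentModRange (M : Matrix V V R) (a b : V → R) : Prop :=
  ∀ α β : R, (∃ p, M *ᵥ p = α • a + β • b) → α = 0 ∧ β = 0

theorem add_vecMulVec_add_vecMulVec_mulVec (p : V → R) :
    (M + vecMulVec a b + vecMulVec b a) *ᵥ p = M *ᵥ p + (b ⬝ᵥ p) • a + (a ⬝ᵥ p) • b := by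
  simp only [add_mulVec, vecMulVec_mulVec, op_smul_eq_smul]

theorem add_vecMulVec_add_vecMulVec_mulVec_eq_iff (hind : LinearIndependentModRange M a b)
    {c : V → R} (hc : ∃ q, M *ᵥ q = c) (p : V → R) :
    (M + vecMulVec a b + vecMulVec b a) *ᵥ p = c ↔ M *ᵥ p = c ∧ a ⬝ᵥ p = 0 ∧ b ⬝ᵥ p = 0 := by
  rw [add_vecMulVec_add_vecMulVec_mulVec]
  constructor
  · intro hp
    obtain ⟨q, rfl⟩ := hc
    obtain ⟨hb, ha⟩ := hind (b ⬝ᵥ p) (a ⬝ᵥ p) ⟨q - p, by rw [mulVec_sub, ← hp]; abel⟩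
    simp only [ha, hb, zero_smul, add_zero] at hp
    exact ⟨hp, ha, hb⟩
  · rintro ⟨hp, ha, hb⟩
    simp only [ha, hb, zero_smul, add_zero, hp]

end CommRing

section Field

variable {K V : Type*} [Field K] [Fintype V] {M : Matrix V V K} {a b : V → K}

theorem Matrix.IsSymm.exists_mulVec_eq_iff (hM : M.IsSymm) (c : V → K) :
    (∃ p, M *ᵥ p = c) ↔ ∀ z, M *ᵥ z = 0 → c ⬝ᵥ z = 0 := by
  constructor
  · rintro ⟨p, rfl⟩ z hz
    rw [← vecMul_transpose, hM.eq, ← dotProduct_mulVec, hz, dotProduct_zero]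
  · intro h
    have hc : dotProductEquiv K V c ∈ (LinearMap.ker M.mulVecLin).dualAnnihilator :=
      (Submodule.mem_dualAnnihilator _).2 h
    rw [← LinearMap.range_dualMap_eq_dualAnnihilator_ker] at hc
    obtain ⟨ψ, hψ⟩ := hc
    obtain ⟨p, rfl⟩ := (dotProductEquiv K V).surjective ψ
    refine ⟨p, (dotProductEquiv K V).injective (LinearMap.ext fun y => ?_)⟩
    have hy := LinearMap.congr_fun hψ y
    simp only [LinearMap.dualMap_apply, dotProductEquiv_apply_apply, mulVecLin_apply] at hy ⊢
    rw [← hy, dotProduct_mulVec, ← mulVec_transpose, hM.eq]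

theorem exists_mulVec_eq_zero_dotProduct_eq (hM : M.IsSymm)
    (hind : LinearIndependentModRange M a b) (α β : K) :
    ∃ z, M *ᵥ z = 0 ∧ a ⬝ᵥ z = α ∧ b ⬝ᵥ z = β := by
  let L : (V → K) →ₗ[K] K × K := (dotProductEquiv K V a).prod (dotProductEquiv K V b)
  suffices hL : LinearMap.range (L.domRestrict (LinearMap.ker M.mulVecLin)) = ⊤ by
    obtain ⟨⟨z, hz⟩, hzαβ⟩ := LinearMap.range_eq_top.1 hL (α, β)
    exact ⟨z, hz, congrArg Prod.fst hzαβ, congrArg Prod.snd hzαβ⟩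
  by_contra hne
  obtain ⟨f, hf0, hf⟩ := Submodule.exists_le_ker_of_lt_top _ (lt_top_iff_ne_top.2 hne)
  have hfL : ∀ z, M *ᵥ z = 0 → f (1, 0) * (a ⬝ᵥ z) + f (0, 1) * (b ⬝ᵥ z) = 0 := by
    intro z hz
    have hfz : f (a ⬝ᵥ z, b ⬝ᵥ z) = 0 := hf ⟨⟨z, hz⟩, rfl⟩
    have hxy : ((a ⬝ᵥ z, b ⬝ᵥ z) : K × K) = (a ⬝ᵥ z) • (1, 0) + (b ⬝ᵥ z) • (0, 1) := by
      ext <;> simp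
    rw [hxy, map_add, map_smul, map_smul, smul_eq_mul, smul_eq_mul] at hfz
    linear_combination hfz
  obtain ⟨h₁, h₂⟩ := hind (f (1, 0)) (f (0, 1)) <| (hM.exists_mulVec_eq_iff _).2 fun z hz => by
    rw [add_dotProduct, smul_dotProduct, smul_dotProduct, smul_eq_mul, smul_eq_mul, hfL z hz]
  exact hf0 (LinearMap.prod_ext (LinearMap.ext_ring h₁) (LinearMap.ext_ring h₂))

theorem exists_add_vecMulVec_add_vecMulVec_mulVec_eq (hM : M.IsSymm)
    (hind : LinearIndependentModRange M a b) (α β : K) :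
    ∃ z, (M + vecMulVec a b + vecMulVec b a) *ᵥ z = α • a + β • b := by
  obtain ⟨z, hz, ha, hb⟩ := exists_mulVec_eq_zero_dotProduct_eq hM hind β α
  exact ⟨z, by rw [add_vecMulVec_add_vecMulVec_mulVec, hz, ha, hb, zero_add]⟩

theorem finrank_ker_add_vecMulVec_add_vecMulVec_add_two (hM : M.IsSymm)
    (hind : LinearIndependentModRange M a b) :
    Module.finrank K (LinearMap.ker (M + vecMulVec a b + vecMulVec b a).mulVecLin) + 2 =
      Module.finrank K (LinearMap.ker M.mulVecLin) := by
  set N := LinearMap.ker M.mulVecLin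
  let L : (V → K) →ₗ[K] K × K := (dotProductEquiv K V a).prod (dotProductEquiv K V b)
  have hker :
      LinearMap.ker (M + vecMulVec a b + vecMulVec b a).mulVecLin = N ⊓ LinearMap.ker L := by
    ext z
    simp only [Submodule.mem_inf, LinearMap.mem_ker, mulVecLin_apply, N, L, LinearMap.prod_apply,
      Function.prod_apply, Prod.mk_eq_zero, dotProductEquiv_apply_apply]
    exact add_vecMulVec_add_vecMulVec_mulVec_eq_iff hind ⟨0, mulVec_zero M⟩ z
  have hrange : LinearMap.range (L.domRestrict N) = ⊤ := by
    refine LinearMap.range_eq_top.2 fun ⟨α, β⟩ => ?_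
    obtain ⟨z, hz, hα, hβ⟩ := exists_mulVec_eq_zero_dotProduct_eq hM hind α β
    exact ⟨⟨z, hz⟩, Prod.ext hα hβ⟩
  have hkerL : LinearMap.ker (L.domRestrict N) ≃ₗ[K] ↥(N ⊓ LinearMap.ker L) := by
    rw [LinearMap.ker_domRestrict, ← top_inf_eq (Submodule.comap _ _),
      ← Submodule.comap_subtype_self N, ← Submodule.comap_inf]
    exact Submodule.comapSubtypeEquivOfLe inf_le_left
  have := LinearMap.finrank_range_add_finrank_ker (L.domRestrict N)
  rw [hrange, finrank_top, Module.finrank_prod, Module.finrank_self, hkerL.finrank_eq,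
    ← hker] at this
  omega

end Field

theorem Matrix.IsSymm.dotProduct_mulVec_self {R V : Type*} [CommRing R] [CharP R 2]
    [Fintype V] {M : Matrix V V R} (hM : M.IsSymm) (z : V → R) :
    z ⬝ᵥ M *ᵥ z = ∑ i, M i i * z i ^ 2 := by
  let Q : (V → R) →+ R :=
    { toFun x := x ⬝ᵥ M *ᵥ x
      map_zero' := zero_dotProduct _
      map_add' x y := by
        have hyx : y ⬝ᵥ M *ᵥ x = x ⬝ᵥ M *ᵥ y := by
          rw [dotProduct_comm, dotProduct_mulVec, ← mulVec_transpose, hM.eq]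
        simp only [mulVec_add, dotProduct_add, add_dotProduct, hyx]
        linear_combination (x ⬝ᵥ M *ᵥ y) * CharTwo.two_eq_zero (R := R) }
  calc z ⬝ᵥ M *ᵥ z = Q (∑ i, Pi.single i (z i)) := by rw [Finset.univ_sum_single]; rfl
    _ = ∑ i, M i i * z i ^ 2 := by
      rw [map_sum]
      refine Finset.sum_congr rfl fun i _ => ?_
      simp [Q, pow_two, mul_comm, mul_left_comm]

theorem linearIndependentModRange_of_not_solv {V : Type*} [Fintype V]
    {M : Matrix V V (ZMod 2)} {a b : V → ZMod 2} (ha : ¬ Solv M a) (hb : ¬ Solv M b)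
    (hab : ¬ Solv M (a + b)) : LinearIndependentModRange M a b := by
  rintro α β ⟨p, hp⟩
  have h01 : ∀ x : ZMod 2, x = 0 ∨ x = 1 := by decide
  rcases h01 α with rfl | rfl <;> rcases h01 β with rfl | rfl
  all_goals simp only [zero_smul, one_smul, add_zero, zero_add] at hp
  · exact ⟨rfl, rfl⟩
  exacts [(hb ⟨p, hp⟩).elim, (ha ⟨p, hp⟩).elim, (hab ⟨p, hp⟩).elim]

theorem nbhdMatrix_isSymm {V : Type*} [Fintype V] (G : SimpleGraph V) :
    (nbhdMatrix G).IsSymm := by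
  ext u v
  simp only [transpose_apply, nbhdMatrix, of_apply, eq_comm, G.adj_comm]

theorem exists_nbhdMatrix_mulVec_eq_one {V : Type*} [Fintype V] (G : SimpleGraph V) :
    ∃ p, nbhdMatrix G *ᵥ p = 1 := by
  have hN : (nbhdMatrix G).IsSymm := nbhdMatrix_isSymm G
  refine (hN.exists_mulVec_eq_iff 1).2 fun z hz => ?_
  have hdiag : ∀ v, nbhdMatrix G v v * z v ^ 2 = z v := fun v => by
    simp only [nbhdMatrix, of_apply, true_or, if_true, one_mul]
    generalize z v = x
    fin_cases x <;> rfl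
  rw [one_dotProduct, ← Finset.sum_congr rfl fun v _ => hdiag v,
    ← hN.dotProduct_mulVec_self, hz, dotProduct_zero]

theorem chi_union {V : Type*} {A₁ A₂ : Set V} (hd : Disjoint A₁ A₂) :
    chi (A₁ ∪ A₂) = chi A₁ + chi A₂ := by
  funext v
  by_cases h₁ : v ∈ A₁
  · simp [chi, h₁, Set.disjoint_left.mp hd h₁]
  · simp [chi, h₁]

/-- Proposition (HO, HO, union HO): the odd dominating patterns of `G*` are exactly the
odd dominating patterns `p` of `G` with `x_{A₁} · p = 0` and `x_{A₂} · p = 0`; `A₁` and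
`A₂` are NO in `G*`, and `ν(G*) = ν(G) − 2`. -/
theorem stmt17 {V : Type*} [Fintype V] (G : SimpleGraph V) (A₁ A₂ : Set V)
    (hd : Disjoint A₁ A₂)
    (h1 : HO (nbhdMatrix G) A₁) (h2 : HO (nbhdMatrix G) A₂)
    (h3 : HO (nbhdMatrix G) (A₁ ∪ A₂)) :
    (∀ p : V → ZMod 2, (starMatrix G A₁ A₂).mulVec p = 1 ↔
      ((nbhdMatrix G).mulVec p = 1 ∧ chi A₁ ⬝ᵥ p = 0 ∧ chi A₂ ⬝ᵥ p = 0)) ∧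
    NO (starMatrix G A₁ A₂) A₁ ∧ NO (starMatrix G A₁ A₂) A₂ ∧
    nullityM (starMatrix G A₁ A₂) + 2 = nullityM (nbhdMatrix G) := by
  have hN : (nbhdMatrix G).IsSymm := nbhdMatrix_isSymm G
  rw [HO, chi_union hd] at h3
  have hind := linearIndependentModRange_of_not_solv h1 h2 h3
  have hodd := add_vecMulVec_add_vecMulVec_mulVec_eq_iff hind (exists_nbhdMatrix_mulVec_eq_one G)
  have hsolv := exists_add_vecMulVec_add_vecMulVec_mulVec_eq hN hind
  refine ⟨hodd, ⟨?_, fun p hp => ((hodd p).1 hp).2.1⟩, ⟨?_, fun p hp => ((hodd p).1 hp).2.2⟩,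
    finrank_ker_add_vecMulVec_add_vecMulVec_add_two hN hind⟩
  · simpa [Solv, starMatrix] using hsolv 1 0
  · simpa [Solv, starMatrix] using hsolv 0 1
end

section
/- Let A₁ and A₂ be disjoint HO sets in G such that A₁ ∪ A₂ is AO in G. Then for any pattern p, N(G*)p = 𝟏 if and only if N(G)p = x̄_{A₁∪A₂} and x_{A₁}·p = 1 and x_{A₂}·p = 1. Moreover, A₁ and A₂ are AO in G*, and ν(G*) = ν(G) − 1. -/
open Matrix
open scoped Classical

section SFAux

variable {V : Type*} [Fintype V]

lemma sf_dot_symm (M : Matrix V V (ZMod 2)) (h : Mᵀ = M) (u w : V → ZMod 2) :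
    u ⬝ᵥ (M.mulVec w) = (M.mulVec u) ⬝ᵥ w := by
  rw [Matrix.dotProduct_mulVec, ← h, Matrix.vecMul_transpose, h]

lemma sf_quad (M : Matrix V V (ZMod 2)) (hs : Mᵀ = M) (hdiag : ∀ i, M i i = 1)
    (p : V → ZMod 2) : p ⬝ᵥ (M.mulVec p) = (1 : V → ZMod 2) ⬝ᵥ p := by
  classical
  have h1 : p ⬝ᵥ (M.mulVec p) = ∑ x ∈ Finset.univ ×ˢ Finset.univ,
      p x.1 * M x.1 x.2 * p x.2 := by
    rw [Finset.sum_product]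
    simp [dotProduct, Matrix.mulVec, Finset.mul_sum, mul_assoc]
  rw [h1, ← Finset.diag_union_offDiag, Finset.sum_union (Finset.disjoint_diag_offDiag _)]
  have hoff : ∑ x ∈ (Finset.univ : Finset V).offDiag, p x.1 * M x.1 x.2 * p x.2 = 0 := by
    apply Finset.sum_involution (fun a _ => Prod.swap a)
    · intro a _
      have hM : M a.2 a.1 = M a.1 a.2 := congrFun (congrFun hs a.1) a.2
      have h2 : (2 : ZMod 2) = 0 := rfl
      simp only [Prod.fst_swap, Prod.snd_swap, hM]
      ring_nf
      rw [h2, mul_zero]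
    · intro a ha _
      simp only [Finset.mem_offDiag] at ha
      intro h
      exact ha.2.2 (congrArg Prod.snd h)
    · intro a ha
      simp only [Finset.mem_offDiag] at ha ⊢
      exact ⟨ha.2.1, ha.1, fun h => ha.2.2 h.symm⟩
    · intro a _; rfl
  rw [hoff, add_zero]
  have hdg : ∑ x ∈ (Finset.univ : Finset V).diag, p x.1 * M x.1 x.2 * p x.2
      = ∑ i : V, p i * p i := by
    rw [Finset.sum_diag]
    exact Finset.sum_congr rfl fun i _ => by rw [hdiag, mul_one]
  rw [hdg]
  simp [dotProduct]
  exact Finset.sum_congr rfl fun i _ => by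
    have : ∀ x : ZMod 2, x * x = x := by decide
    rw [this]

lemma sf_solv_iff_ker (M : Matrix V V (ZMod 2)) (hs : Mᵀ = M) (c : V → ZMod 2) :
    (∃ p, M.mulVec p = c) ↔ ∀ k, M.mulVec k = 0 → c ⬝ᵥ k = 0 := by
  constructor
  · rintro ⟨p, rfl⟩ k hk
    rw [← sf_dot_symm M hs, hk, dotProduct_zero]
  · intro h
    have hc : c ∈ LinearMap.range M.mulVecLin := by
      rw [← Subspace.forall_mem_dualAnnihilator_apply_eq_zero_iff]
      intro φ hφ
      set k : V → ZMod 2 := fun v => φ (fun j => if v = j then 1 else 0) with hk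
      have hφx : ∀ x : V → ZMod 2, φ x = k ⬝ᵥ x := by
        intro x
        conv_lhs => rw [pi_eq_sum_univ x]
        rw [map_sum]
        simp only [_root_.map_smul, smul_eq_mul]
        simp [dotProduct, hk, mul_comm]
      have hker : M.mulVec k = 0 := by
        funext v
        have := (Submodule.mem_dualAnnihilator φ).mp hφ
          (M.mulVec (fun j => if v = j then 1 else 0)) (LinearMap.mem_range.mpr ⟨_, rfl⟩)
        rw [hφx, sf_dot_symm M hs] at this
        simpa [dotProduct, eq_comm] using this
      rw [hφx, dotProduct_comm]
      exact h k hker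
    obtain ⟨p, hp⟩ := hc
    exact ⟨p, hp⟩

lemma sf_nbhd_symm (G : SimpleGraph V) : (nbhdMatrix G)ᵀ = nbhdMatrix G := by
  ext u v
  simp only [nbhdMatrix, Matrix.transpose_apply, Matrix.of_apply]
  exact if_congr (or_congr eq_comm (G.adj_comm v u)) rfl rfl

lemma sf_nbhd_diag (G : SimpleGraph V) : ∀ i, nbhdMatrix G i i = 1 := by
  intro i; simp [nbhdMatrix]

lemma sf_vmv (x y p : V → ZMod 2) :
    (Matrix.vecMulVec x y).mulVec p = (y ⬝ᵥ p) • x := by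
  funext i
  simp only [Matrix.mulVec, Matrix.vecMulVec_apply, dotProduct, Pi.smul_apply,
    smul_eq_mul, Finset.sum_mul, Finset.mul_sum]
  exact Finset.sum_congr rfl fun j _ => by ring

lemma sf_star_mulVec (G : SimpleGraph V) (A₁ A₂ : Set V) (p : V → ZMod 2) :
    (starMatrix G A₁ A₂).mulVec p =
      (nbhdMatrix G).mulVec p + (chi A₂ ⬝ᵥ p) • chi A₁ + (chi A₁ ⬝ᵥ p) • chi A₂ := by
  rw [starMatrix, Matrix.add_mulVec, Matrix.add_mulVec, sf_vmv, sf_vmv]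

lemma sf_chi_union {A₁ A₂ : Set V} (hd : Disjoint A₁ A₂) :
    chi (A₁ ∪ A₂) = chi A₁ + chi A₂ := by
  funext v
  simp only [chi, Pi.add_apply, Set.mem_union]
  by_cases h1 : v ∈ A₁
  · have h2 : v ∉ A₂ := Set.disjoint_left.mp hd h1
    simp [h1, h2]
  · by_cases h2 : v ∈ A₂ <;> simp [h1, h2]

end SFAux

/-- Proposition (HO, HO, union AO): the odd dominating patterns of `G*` are exactly the
solving patterns `p` of `x̄_{A₁∪A₂}` in `G` with `x_{A₁} · p = 1` and `x_{A₂} · p = 1`;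
`A₁` and `A₂` are AO in `G*`, and `ν(G*) = ν(G) − 1`. -/
theorem stmt18 {V : Type*} [Fintype V] (G : SimpleGraph V) (A₁ A₂ : Set V)
    (hd : Disjoint A₁ A₂)
    (h1 : HO (nbhdMatrix G) A₁) (h2 : HO (nbhdMatrix G) A₂)
    (h3 : AO (nbhdMatrix G) (A₁ ∪ A₂)) :
    (∀ p : V → ZMod 2, (starMatrix G A₁ A₂).mulVec p = 1 ↔
      ((nbhdMatrix G).mulVec p = chi (A₁ ∪ A₂) + 1 ∧
        chi A₁ ⬝ᵥ p = 1 ∧ chi A₂ ⬝ᵥ p = 1)) ∧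
    AO (starMatrix G A₁ A₂) A₁ ∧ AO (starMatrix G A₁ A₂) A₂ ∧
    nullityM (starMatrix G A₁ A₂) + 1 = nullityM (nbhdMatrix G) := by
  classical
  have hNs : (nbhdMatrix G)ᵀ = nbhdMatrix G := sf_nbhd_symm G
  have hNd : ∀ i, nbhdMatrix G i i = 1 := sf_nbhd_diag G
  have hU : chi (A₁ ∪ A₂) = chi A₁ + chi A₂ := sf_chi_union hd
  -- Sutner's theorem: the all-ones configuration is solvable
  obtain ⟨r, hr⟩ : ∃ r, (nbhdMatrix G).mulVec r = 1 := by
    rw [sf_solv_iff_ker _ hNs]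
    intro k hk
    have hq := sf_quad (nbhdMatrix G) hNs hNd k
    rw [hk, dotProduct_zero] at hq
    exact hq.symm
  have honeker : ∀ z, (nbhdMatrix G).mulVec z = 0 → (1 : V → ZMod 2) ⬝ᵥ z = 0 := by
    intro z hz
    calc (1 : V → ZMod 2) ⬝ᵥ z = ((nbhdMatrix G).mulVec r) ⬝ᵥ z := by rw [hr]
      _ = r ⬝ᵥ ((nbhdMatrix G).mulVec z) := (sf_dot_symm _ hNs r z).symm
      _ = 0 := by rw [hz, dotProduct_zero]
  -- a kernel vector detecting A₁ (and hence A₂)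
  obtain ⟨z₁, hz₁0, hz₁1⟩ : ∃ z, (nbhdMatrix G).mulVec z = 0 ∧ chi A₁ ⬝ᵥ z = 1 := by
    have hh := h1
    rw [HO, Solv, sf_solv_iff_ker _ hNs] at hh
    push_neg at hh
    obtain ⟨z, hz0, hzne⟩ := hh
    refine ⟨z, hz0, ?_⟩
    have hZ : ∀ a : ZMod 2, a ≠ 0 → a = 1 := by decide
    exact hZ _ hzne
  have hsolvU : ∃ q, (nbhdMatrix G).mulVec q = chi A₁ + chi A₂ := by
    obtain ⟨q, hq⟩ := h3.1
    exact ⟨q, by rw [hq, hU]⟩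
  have hker_eq : ∀ z, (nbhdMatrix G).mulVec z = 0 → chi A₂ ⬝ᵥ z = chi A₁ ⬝ᵥ z := by
    intro z hz
    obtain ⟨q, hq⟩ := hsolvU
    have h0 : (chi A₁ + chi A₂) ⬝ᵥ z = 0 := by
      rw [← hq, ← sf_dot_symm _ hNs, hz, dotProduct_zero]
    rw [add_dotProduct] at h0
    have hZ : ∀ a b : ZMod 2, a + b = 0 → b = a := by decide
    exact hZ _ _ h0
  have hz₁2 : chi A₂ ⬝ᵥ z₁ = 1 := by rw [hker_eq z₁ hz₁0, hz₁1]
  -- every solution of x₁ + x₂ has x₁·q + x₂·q = 1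
  have hq_sum : ∀ q, (nbhdMatrix G).mulVec q = chi A₁ + chi A₂ →
      chi A₁ ⬝ᵥ q + chi A₂ ⬝ᵥ q = 1 := by
    intro q hq
    have hAOr : chi (A₁ ∪ A₂) ⬝ᵥ r = 1 := h3.2 r hr
    have h1q : (1 : V → ZMod 2) ⬝ᵥ q = 1 := by
      calc (1 : V → ZMod 2) ⬝ᵥ q = ((nbhdMatrix G).mulVec r) ⬝ᵥ q := by rw [hr]
        _ = r ⬝ᵥ ((nbhdMatrix G).mulVec q) := (sf_dot_symm _ hNs r q).symm
        _ = r ⬝ᵥ (chi A₁ + chi A₂) := by rw [hq]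
        _ = (chi A₁ + chi A₂) ⬝ᵥ r := dotProduct_comm _ _
        _ = chi (A₁ ∪ A₂) ⬝ᵥ r := by rw [hU]
        _ = 1 := hAOr
    calc chi A₁ ⬝ᵥ q + chi A₂ ⬝ᵥ q = (chi A₁ + chi A₂) ⬝ᵥ q :=
        (add_dotProduct _ _ _).symm
      _ = ((nbhdMatrix G).mulVec q) ⬝ᵥ q := by rw [hq]
      _ = q ⬝ᵥ ((nbhdMatrix G).mulVec q) := dotProduct_comm _ _
      _ = (1 : V → ZMod 2) ⬝ᵥ q := sf_quad _ hNs hNd q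
      _ = 1 := h1q
  -- Part 1
  have part1 : ∀ p : V → ZMod 2, (starMatrix G A₁ A₂).mulVec p = 1 ↔
      ((nbhdMatrix G).mulVec p = chi (A₁ ∪ A₂) + 1 ∧
        chi A₁ ⬝ᵥ p = 1 ∧ chi A₂ ⬝ᵥ p = 1) := by
    intro p
    constructor
    · intro hp
      have hstar := sf_star_mulVec G A₁ A₂ p
      rw [hp] at hstar
      -- hstar : 1 = N p + a • x₁ + b • x₂
      have hNp : (nbhdMatrix G).mulVec p =
          1 + (chi A₂ ⬝ᵥ p) • chi A₁ + (chi A₁ ⬝ᵥ p) • chi A₂ := by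
        funext i
        have hi := congrFun hstar i
        simp only [Pi.add_apply, Pi.smul_apply, smul_eq_mul, Pi.one_apply] at hi ⊢
        have hZ : ∀ x y z : ZMod 2, 1 = x + y + z → x = 1 + y + z := by decide
        exact hZ _ _ _ hi
      have hdot : ((nbhdMatrix G).mulVec p) ⬝ᵥ z₁ = 0 := by
        rw [← sf_dot_symm _ hNs, hz₁0, dotProduct_zero]
      rw [hNp, add_dotProduct, add_dotProduct, smul_dotProduct,
        smul_dotProduct, hz₁1, hz₁2, honeker z₁ hz₁0] at hdot
      have hab : chi A₂ ⬝ᵥ p = chi A₁ ⬝ᵥ p := by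
        have hZ : ∀ a b : ZMod 2, 0 + a • (1 : ZMod 2) + b • (1 : ZMod 2) = 0 → a = b := by
          decide
        exact hZ _ _ hdot
      by_cases hb : chi A₁ ⬝ᵥ p = 0
      · exfalso
        have ha : chi A₂ ⬝ᵥ p = 0 := by rw [hab, hb]
        have hNp1 : (nbhdMatrix G).mulVec p = 1 := by
          rw [hNp, ha, hb, zero_smul, zero_smul, add_zero, add_zero]
        have hcontra := h3.2 p hNp1
        rw [hU, add_dotProduct, hb, ha] at hcontra
        exact absurd hcontra (by decide)
      · have hb1 : chi A₁ ⬝ᵥ p = 1 := by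
          have hZ : ∀ a : ZMod 2, a ≠ 0 → a = 1 := by decide
          exact hZ _ hb
        have ha1 : chi A₂ ⬝ᵥ p = 1 := by rw [hab, hb1]
        refine ⟨?_, hb1, ha1⟩
        rw [hNp, ha1, hb1, one_smul, one_smul, hU]
        ring
    · rintro ⟨hNp, hb, ha⟩
      rw [sf_star_mulVec, hNp, ha, hb, one_smul, one_smul, hU]
      funext i
      simp only [Pi.add_apply, Pi.one_apply]
      have hZ : ∀ a b : ZMod 2, a + b + 1 + a + b = 1 := by decide
      exact hZ _ _
  -- construct solving patterns for chi A₁ and chi A₂ in G*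
  obtain ⟨q, hq⟩ := hsolvU
  have hsum := hq_sum q hq
  have hqz : (nbhdMatrix G).mulVec (q + z₁) = chi A₁ + chi A₂ := by
    rw [Matrix.mulVec_add, hz₁0, add_zero, hq]
  have hval1 : ∀ w, (nbhdMatrix G).mulVec w = chi A₁ + chi A₂ → chi A₁ ⬝ᵥ w = 1 →
      chi A₂ ⬝ᵥ w = 0 → (starMatrix G A₁ A₂).mulVec w = chi A₁ := by
    intro w hw hb ha
    rw [sf_star_mulVec, hw, ha, hb, zero_smul, one_smul, add_zero]
    funext i
    simp only [Pi.add_apply]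
    have hZ : ∀ a b : ZMod 2, a + b + b = a := by decide
    exact hZ _ _
  have hval2 : ∀ w, (nbhdMatrix G).mulVec w = chi A₁ + chi A₂ → chi A₁ ⬝ᵥ w = 0 →
      chi A₂ ⬝ᵥ w = 1 → (starMatrix G A₁ A₂).mulVec w = chi A₂ := by
    intro w hw hb ha
    rw [sf_star_mulVec, hw, ha, hb, zero_smul, one_smul, add_zero]
    funext i
    simp only [Pi.add_apply]
    have hZ : ∀ a b : ZMod 2, a + b + a = b := by decide
    exact hZ _ _
  have hwit : (∃ w, (starMatrix G A₁ A₂).mulVec w = chi A₁) ∧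
      (∃ w, (starMatrix G A₁ A₂).mulVec w = chi A₂) := by
    by_cases hs1 : chi A₁ ⬝ᵥ q = 1
    · have hs2 : chi A₂ ⬝ᵥ q = 0 := by
        have hZ : ∀ a b : ZMod 2, a + b = 1 → a = 1 → b = 0 := by decide
        exact hZ _ _ hsum hs1
      have hb' : chi A₁ ⬝ᵥ (q + z₁) = 0 := by
        rw [dotProduct_add, hz₁1, hs1]; decide
      have ha' : chi A₂ ⬝ᵥ (q + z₁) = 1 := by
        rw [dotProduct_add, hz₁2, hs2]; decide
      exact ⟨⟨q, hval1 q hq hs1 hs2⟩, ⟨q + z₁, hval2 _ hqz hb' ha'⟩⟩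
    · have hs1' : chi A₁ ⬝ᵥ q = 0 := by
        have hZ : ∀ a : ZMod 2, a ≠ 1 → a = 0 := by decide
        exact hZ _ hs1
      have hs2 : chi A₂ ⬝ᵥ q = 1 := by
        have hZ : ∀ a b : ZMod 2, a + b = 1 → a = 0 → b = 1 := by decide
        exact hZ _ _ hsum hs1'
      have hb' : chi A₁ ⬝ᵥ (q + z₁) = 1 := by
        rw [dotProduct_add, hz₁1, hs1']; decide
      have ha' : chi A₂ ⬝ᵥ (q + z₁) = 0 := by
        rw [dotProduct_add, hz₁2, hs2]; decide
      exact ⟨⟨q + z₁, hval1 _ hqz hb' ha'⟩, ⟨q, hval2 q hq hs1' hs2⟩⟩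
  -- nullity
  let φ : (V → ZMod 2) →ₗ[ZMod 2] ZMod 2 :=
    { toFun := fun w => chi A₁ ⬝ᵥ w
      map_add' := fun u v => dotProduct_add _ u v
      map_smul' := fun c u => by simp [dotProduct_smul] }
  have hφ : ∀ w, φ w = chi A₁ ⬝ᵥ w := fun _ => rfl
  have hker : LinearMap.ker (starMatrix G A₁ A₂).mulVecLin =
      LinearMap.ker (nbhdMatrix G).mulVecLin ⊓ LinearMap.ker φ := by
    ext k
    simp only [Submodule.mem_inf, LinearMap.mem_ker, Matrix.mulVecLin_apply, hφ]
    constructor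
    · intro hk
      have hstar := sf_star_mulVec G A₁ A₂ k
      rw [hk] at hstar
      have hNk : (nbhdMatrix G).mulVec k =
          (chi A₂ ⬝ᵥ k) • chi A₁ + (chi A₁ ⬝ᵥ k) • chi A₂ := by
        funext i
        have hi := congrFun hstar i
        simp only [Pi.add_apply, Pi.smul_apply, smul_eq_mul, Pi.zero_apply] at hi ⊢
        have hZ : ∀ x y z : ZMod 2, 0 = x + y + z → x = y + z := by decide
        exact hZ _ _ _ hi
      have hdot : ((nbhdMatrix G).mulVec k) ⬝ᵥ z₁ = 0 := by
        rw [← sf_dot_symm _ hNs, hz₁0, dotProduct_zero]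
      rw [hNk, add_dotProduct, smul_dotProduct, smul_dotProduct,
        hz₁1, hz₁2] at hdot
      have hab : chi A₂ ⬝ᵥ k = chi A₁ ⬝ᵥ k := by
        have hZ : ∀ a b : ZMod 2, a • (1 : ZMod 2) + b • (1 : ZMod 2) = 0 → a = b := by decide
        exact hZ _ _ hdot
      by_cases hb : chi A₁ ⬝ᵥ k = 0
      · have ha : chi A₂ ⬝ᵥ k = 0 := by rw [hab, hb]
        refine ⟨?_, hb⟩
        rw [hNk, ha, hb, zero_smul, zero_smul, add_zero]
      · exfalso
        have hb1 : chi A₁ ⬝ᵥ k = 1 := by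
          have hZ : ∀ a : ZMod 2, a ≠ 0 → a = 1 := by decide
          exact hZ _ hb
        have ha1 : chi A₂ ⬝ᵥ k = 1 := by rw [hab, hb1]
        have hNk' : (nbhdMatrix G).mulVec k = chi A₁ + chi A₂ := by
          rw [hNk, ha1, hb1, one_smul, one_smul]
        have hcontra := hq_sum k hNk'
        rw [hb1, ha1] at hcontra
        exact absurd hcontra (by decide)
    · rintro ⟨hk0, hb⟩
      have ha : chi A₂ ⬝ᵥ k = 0 := by rw [hker_eq k hk0, hb]
      rw [sf_star_mulVec, hk0, ha, hb, zero_smul, zero_smul, add_zero, add_zero]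
  have hz₁mem : z₁ ∈ LinearMap.ker (nbhdMatrix G).mulVecLin := by
    simp only [LinearMap.mem_ker, Matrix.mulVecLin_apply]
    exact hz₁0
  set K := LinearMap.ker (nbhdMatrix G).mulVecLin with hK
  let ψ : K →ₗ[ZMod 2] ZMod 2 := φ.comp K.subtype
  have hψtop : LinearMap.range ψ = ⊤ := by
    rw [eq_top_iff]
    rintro c -
    have h1mem : (1 : ZMod 2) ∈ LinearMap.range ψ := ⟨⟨z₁, hz₁mem⟩, hz₁1⟩
    have hc := Submodule.smul_mem (LinearMap.range ψ) c h1mem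
    simpa using hc
  have hrn := LinearMap.finrank_range_add_finrank_ker ψ
  rw [hψtop, finrank_top, Module.finrank_self] at hrn
  have hcomap : LinearMap.ker ψ = Submodule.comap K.subtype (K ⊓ LinearMap.ker φ) := by
    rw [LinearMap.ker_comp, Submodule.comap_inf, Submodule.comap_subtype_self, top_inf_eq]
  have hfr : Module.finrank (ZMod 2) (LinearMap.ker ψ)
      = Module.finrank (ZMod 2) (K ⊓ LinearMap.ker φ : Submodule (ZMod 2) (V → ZMod 2)) := by
    rw [hcomap]
    exact LinearEquiv.finrank_eq (Submodule.comapSubtypeEquivOfLe inf_le_left)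
  have hnullS : nullityM (starMatrix G A₁ A₂) = Module.finrank (ZMod 2) (LinearMap.ker ψ) := by
    rw [nullityM, hker, hfr]
  refine ⟨part1, ⟨hwit.1, fun p hp => ((part1 p).mp hp).2.1⟩,
    ⟨hwit.2, fun p hp => ((part1 p).mp hp).2.2⟩, ?_⟩
  calc nullityM (starMatrix G A₁ A₂) + 1
      = 1 + Module.finrank (ZMod 2) (LinearMap.ker ψ) := by rw [hnullS, add_comm]
    _ = Module.finrank (ZMod 2) K := hrn
    _ = nullityM (nbhdMatrix G) := rfl
end
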